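/- arXiv:2509.06248 — 2 statements merged into one kernel-verified Lean document; each statement's English description precedes it below -/
import Mathlib

section
/- Let ψ be an analytic function on ℂ. Define f₀(s) = 1 and f_{k+1}(s) = f_k'(s) − (1/2)ψ(s)f_k(s). Then for every k ≥ 1, f_k(s) = k! · Σ over tuples (a₁,…,a_k) of non-negative integers with a₁ + 2a₂ + ⋯ + k·a_k = k of (−1/2)^{a₁+⋯+a_k} · ∏_{l=1}^{k} (1/a_l!) · (ψ^{(l−1)}(s)/l!)^{a_l}. -/
/-- The sequence `f₀ = 1`, `f_{k+1}(s) = f_k'(s) - (1/2) ψ(s) f_k(s)`. -/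
noncomputable def iterf (ψ : ℂ → ℂ) : ℕ → ℂ → ℂ
  | 0 => fun _ => 1
  | k + 1 => fun s => deriv (iterf ψ k) s - (1 / 2) * ψ s * iterf ψ k s

open Finset

namespace Stmt2Aux

variable (ψ : ℂ → ℂ)

/-- `H l s = ψ^{(l)}(s)/(l+1)!`. -/
noncomputable def H (l : ℕ) (s : ℂ) : ℂ := iteratedDeriv l ψ s / ((l + 1).factorial : ℂ)

/-- A single factor of the partition sum. -/
noncomputable def u (m l : ℕ) (s : ℂ) : ℂ :=
  (-(1 / 2) : ℂ) ^ m / (m.factorial : ℂ) * H ψ l s ^ m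

noncomputable def term {n : ℕ} (a : Fin n → ℕ) (s : ℂ) : ℂ :=
  ∏ l : Fin n, u ψ (a l) (l : ℕ) s

/-- The derivative of `u m l`. -/
noncomputable def Dval (m l : ℕ) (s : ℂ) : ℂ :=
  (-(1 / 2) : ℂ) ^ m / (m.factorial : ℂ) *
    ((m : ℂ) * H ψ l s ^ (m - 1) * (((l : ℕ) + 2 : ℂ) * H ψ (l + 1) s))

def Pset (n k : ℕ) : Finset (Fin n → ℕ) :=
  Finset.filter (fun a => ∑ l : Fin n, ((l : ℕ) + 1) * a l = k)
    (Fintype.piFinset fun _ => Finset.range (k + 1))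

lemma mem_Pset {n k : ℕ} {a : Fin n → ℕ} :
    a ∈ Pset n k ↔ ∑ l : Fin n, ((l : ℕ) + 1) * a l = k := by
  simp only [Pset, Finset.mem_filter, Fintype.mem_piFinset, Finset.mem_range]
  constructor
  · exact fun h => h.2
  · intro h
    refine ⟨fun l => ?_, h⟩
    have h1 : ((l : ℕ) + 1) * a l ≤ k := h ▸ Finset.single_le_sum
      (f := fun l : Fin n => ((l : ℕ) + 1) * a l) (fun _ _ => Nat.zero_le _) (Finset.mem_univ l)
    have : a l ≤ ((l : ℕ) + 1) * a l := Nat.le_mul_of_pos_left _ (Nat.succ_pos _)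
    omega

lemma Pset_big {n k : ℕ} {a : Fin n → ℕ} (ha : a ∈ Pset n k) {l : Fin n}
    (hl : k < (l : ℕ) + 1) : a l = 0 := by
  rw [mem_Pset] at ha
  have h1 : ((l : ℕ) + 1) * a l ≤ k := ha ▸ Finset.single_le_sum
    (f := fun l : Fin n => ((l : ℕ) + 1) * a l) (fun _ _ => Nat.zero_le _) (Finset.mem_univ l)
  by_contra h
  have : (l : ℕ) + 1 ≤ ((l : ℕ) + 1) * a l := Nat.le_mul_of_pos_right _ (Nat.pos_of_ne_zero h)
  omega

lemma hasDerivAt_H (hψ : ContDiff ℂ ⊤ ψ) (l : ℕ) (s : ℂ) :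
    HasDerivAt (H ψ l) ((((l : ℕ) + 2 : ℂ)) * H ψ (l + 1) s) s := by
  have hd : HasDerivAt (iteratedDeriv l ψ) (iteratedDeriv (l + 1) ψ s) s := by
    have h1 : DifferentiableAt ℂ (iteratedDeriv l ψ) s :=
      (hψ.differentiable_iteratedDeriv l (by exact_mod_cast lt_top_iff_ne_top.2 (by simp))) s
    have := h1.hasDerivAt
    rwa [iteratedDeriv_succ]
  have key := hd.div_const ((l + 1).factorial : ℂ)
  refine key.congr_deriv ?_
  unfold H
  have h2 : ((l + 1 + 1).factorial : ℂ) = ((l : ℂ) + 2) * ((l + 1).factorial : ℂ) := by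
    rw [Nat.factorial_succ]; push_cast; ring
  rw [h2]
  have h3 : ((l + 1).factorial : ℂ) ≠ 0 := Nat.cast_ne_zero.mpr (Nat.factorial_ne_zero _)
  have h4 : ((l : ℂ) + 2) ≠ 0 := by
    have : ((l + 2 : ℕ) : ℂ) ≠ 0 := Nat.cast_ne_zero.mpr (by omega)
    push_cast at this; exact this
  field_simp

lemma hasDerivAt_u (hψ : ContDiff ℂ ⊤ ψ) (m l : ℕ) (s : ℂ) :
    HasDerivAt (u ψ m l) (Dval ψ m l s) s := by
  have := ((hasDerivAt_H ψ hψ l s).pow m).const_mul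
    ((-(1 / 2) : ℂ) ^ m / (m.factorial : ℂ))
  exact this

lemma hasDerivAt_term (hψ : ContDiff ℂ ⊤ ψ) {n : ℕ} (a : Fin n → ℕ) (s : ℂ) :
    HasDerivAt (term ψ a)
      (∑ j : Fin n, (∏ l ∈ Finset.univ.erase j, u ψ (a l) (l : ℕ) s) * Dval ψ (a j) (j : ℕ) s)
      s := by
  have := HasDerivAt.fun_finsetProd (u := Finset.univ)
    (f := fun (l : Fin n) => u ψ (a l) (l : ℕ)) (f' := fun l => Dval ψ (a l) (l : ℕ) s)
    (fun l _ => hasDerivAt_u ψ hψ (a l) l s)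
  simp only [smul_eq_mul] at this
  exact this

lemma weight_update {n : ℕ} (a : Fin n → ℕ) (i : Fin n) (x : ℕ) :
    (∑ l : Fin n, ((l : ℕ) + 1) * Function.update a i x l) + ((i : ℕ) + 1) * a i
      = (∑ l : Fin n, ((l : ℕ) + 1) * a l) + ((i : ℕ) + 1) * x := by
  rw [← Finset.add_sum_erase _ (fun l : Fin n => ((l : ℕ) + 1) * Function.update a i x l)
      (Finset.mem_univ i),
    ← Finset.add_sum_erase _ (fun l : Fin n => ((l : ℕ) + 1) * a l) (Finset.mem_univ i)]
  have he : ∑ l ∈ Finset.univ.erase i, ((l : ℕ) + 1) * Function.update a i x l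
      = ∑ l ∈ Finset.univ.erase i, ((l : ℕ) + 1) * a l :=
    Finset.sum_congr rfl fun l hl => by
      rw [Function.update_of_ne (Finset.ne_of_mem_erase hl)]
  rw [he, Function.update_self]
  ring

lemma term_update {n : ℕ} (a : Fin n → ℕ) (i : Fin n) (x : ℕ) (s : ℂ) :
    term ψ (Function.update a i x) s
      = u ψ x (i : ℕ) s * ∏ l ∈ Finset.univ.erase i, u ψ (a l) (l : ℕ) s := by
  unfold term
  rw [← Finset.mul_prod_erase _ (fun l : Fin n => u ψ (Function.update a i x l) (l : ℕ) s)
    (Finset.mem_univ i), Function.update_self]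
  congr 1
  exact Finset.prod_congr rfl fun l hl => by
    rw [Function.update_of_ne (Finset.ne_of_mem_erase hl)]

lemma H_zero (s : ℂ) : H ψ 0 s = ψ s := by
  simp [H, iteratedDeriv_zero]

lemma key0 {n : ℕ} (hn : 0 < n) (a : Fin n → ℕ) (s : ℂ) :
    (-(1 / 2) : ℂ) * ψ s * term ψ a s
      = (((a ⟨0, hn⟩ : ℕ) : ℂ) + 1) *
          term ψ (Function.update a ⟨0, hn⟩ (a ⟨0, hn⟩ + 1)) s := by
  set i0 : Fin n := ⟨0, hn⟩ with hi0
  rw [term_update]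
  unfold term
  rw [← Finset.mul_prod_erase _ (fun l : Fin n => u ψ (a l) (l : ℕ) s) (Finset.mem_univ i0)]
  have hval : (i0 : ℕ) = 0 := rfl
  rw [hval]
  set P := ∏ l ∈ Finset.univ.erase i0, u ψ (a l) (l : ℕ) s
  set A := a i0
  unfold u
  rw [H_zero]
  have h1 : ((A + 1).factorial : ℂ) = ((A : ℂ) + 1) * (A.factorial : ℂ) := by
    rw [Nat.factorial_succ]; push_cast; ring
  rw [h1]
  have h2 : (A.factorial : ℂ) ≠ 0 := Nat.cast_ne_zero.mpr (Nat.factorial_ne_zero _)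
  have h3 : ((A : ℂ) + 1) ≠ 0 := by
    have : ((A + 1 : ℕ) : ℂ) ≠ 0 := Nat.cast_ne_zero.mpr (by omega)
    push_cast at this; exact this
  field_simp
  ring

lemma key1 {n : ℕ} (j : Fin n) (h : (j : ℕ) + 1 < n) (a : Fin n → ℕ) (s : ℂ)
    (ha : a j ≠ 0) :
    (∏ l ∈ Finset.univ.erase j, u ψ (a l) (l : ℕ) s) * Dval ψ (a j) (j : ℕ) s
      = (((j : ℕ) : ℂ) + 2) * (((a ⟨(j : ℕ) + 1, h⟩ : ℕ) : ℂ) + 1) *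
          term ψ (Function.update (Function.update a j (a j - 1)) ⟨(j : ℕ) + 1, h⟩
            (a ⟨(j : ℕ) + 1, h⟩ + 1)) s := by
  set j' : Fin n := ⟨(j : ℕ) + 1, h⟩ with hj'
  have hne : j' ≠ j := by simp [hj', Fin.ext_iff]
  have hmem : j' ∈ Finset.univ.erase j := Finset.mem_erase.2 ⟨hne, Finset.mem_univ _⟩
  have hmem2 : j ∈ Finset.univ.erase j' := Finset.mem_erase.2 ⟨hne.symm, Finset.mem_univ _⟩
  -- LHS : pull out j'
  rw [← Finset.mul_prod_erase _ (fun l : Fin n => u ψ (a l) (l : ℕ) s) hmem]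
  -- RHS : term of the double update
  rw [term_update]
  rw [← Finset.mul_prod_erase _
    (fun l : Fin n => u ψ (Function.update a j (a j - 1) l) (l : ℕ) s) hmem2]
  rw [Function.update_self]
  have hrest : ∏ l ∈ (Finset.univ.erase j').erase j,
      u ψ (Function.update a j (a j - 1) l) (l : ℕ) s
      = ∏ l ∈ (Finset.univ.erase j).erase j', u ψ (a l) (l : ℕ) s := by
    rw [Finset.erase_right_comm]
    exact Finset.prod_congr rfl fun l hl => by
      rw [Function.update_of_ne (Finset.ne_of_mem_erase (Finset.mem_of_mem_erase hl))]
  rw [hrest]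
  set P := ∏ l ∈ (Finset.univ.erase j).erase j', u ψ (a l) (l : ℕ) s
  obtain ⟨A, hA⟩ : ∃ A, a j = A + 1 := ⟨a j - 1, by omega⟩
  set B := a j' with hB
  have hv : ((j' : Fin n) : ℕ) = (j : ℕ) + 1 := rfl
  rw [hA, hv]
  unfold u Dval
  simp only [Nat.add_sub_cancel]
  have h1 : ((A + 1).factorial : ℂ) = ((A : ℂ) + 1) * (A.factorial : ℂ) := by
    rw [Nat.factorial_succ]; push_cast; ring
  have h2 : ((B + 1).factorial : ℂ) = ((B : ℂ) + 1) * (B.factorial : ℂ) := by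
    rw [Nat.factorial_succ]; push_cast; ring
  rw [h1, h2]
  have hA0 : (A.factorial : ℂ) ≠ 0 := Nat.cast_ne_zero.mpr (Nat.factorial_ne_zero _)
  have hB0 : (B.factorial : ℂ) ≠ 0 := Nat.cast_ne_zero.mpr (Nat.factorial_ne_zero _)
  have hA1 : ((A : ℂ) + 1) ≠ 0 := by
    have : ((A + 1 : ℕ) : ℂ) ≠ 0 := Nat.cast_ne_zero.mpr (by omega)
    push_cast at this; exact this
  have hB1 : ((B : ℂ) + 1) ≠ 0 := by
    have : ((B + 1 : ℕ) : ℂ) ≠ 0 := Nat.cast_ne_zero.mpr (by omega)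
    push_cast at this; exact this
  push_cast
  field_simp
  ring

lemma sumA {n k : ℕ} (hn : 0 < n) (s : ℂ) :
    (∑ a ∈ Pset n k, (((a ⟨0, hn⟩ : ℕ) : ℂ) + 1) *
        term ψ (Function.update a ⟨0, hn⟩ (a ⟨0, hn⟩ + 1)) s)
      = ∑ b ∈ Pset n (k + 1), ((b ⟨0, hn⟩ : ℕ) : ℂ) * term ψ b s := by
  set i0 : Fin n := ⟨0, hn⟩ with hi0
  have hv0 : (i0 : ℕ) = 0 := rfl
  rw [← Finset.sum_filter_add_sum_filter_not (Pset n (k + 1)) (fun b => b i0 ≠ 0)]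
  have h2 : ∑ b ∈ Finset.filter (fun b => ¬ b i0 ≠ 0) (Pset n (k + 1)),
      ((b i0 : ℕ) : ℂ) * term ψ b s = 0 := by
    refine Finset.sum_eq_zero fun b hb => ?_
    have hb0 : b i0 = 0 := by simpa using (Finset.mem_filter.1 hb).2
    rw [hb0]; simp
  rw [h2, add_zero]
  refine Finset.sum_nbij' (fun a => Function.update a i0 (a i0 + 1))
    (fun b => Function.update b i0 (b i0 - 1)) ?_ ?_ ?_ ?_ ?_
  · intro a ha
    rw [mem_Pset] at ha
    refine Finset.mem_filter.2 ⟨mem_Pset.2 ?_, by simp⟩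
    have h1 := weight_update a i0 (a i0 + 1)
    simp only [hv0] at h1
    omega
  · intro b hb
    obtain ⟨hbP, hb0⟩ := Finset.mem_filter.1 hb
    rw [mem_Pset] at hbP
    have hb0' : b i0 ≠ 0 := hb0
    refine mem_Pset.2 ?_
    have h1 := weight_update b i0 (b i0 - 1)
    simp only [hv0] at h1
    omega
  · intro a _
    rw [Function.update_idem, Function.update_self, Nat.add_sub_cancel,
      Function.update_eq_self]
  · intro b hb
    have hb0 : b i0 ≠ 0 := (Finset.mem_filter.1 hb).2
    rw [Function.update_idem, Function.update_self]
    have hsub : b i0 - 1 + 1 = b i0 := by omega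
    rw [hsub, Function.update_eq_self]
  · intro a _
    rw [Function.update_self]
    push_cast
    ring

lemma sumM {n k : ℕ} (hkn : k + 1 ≤ n) (j : Fin n) (s : ℂ) :
    (∑ a ∈ Pset n k, (∏ l ∈ Finset.univ.erase j, u ψ (a l) (l : ℕ) s) *
        Dval ψ (a j) (j : ℕ) s)
      = ∑ b ∈ Pset n (k + 1),
          ((if h : (j : ℕ) + 1 < n then ((j : ℕ) + 2) * b ⟨(j : ℕ) + 1, h⟩ else 0 : ℕ) : ℂ) *
            term ψ b s := by
  by_cases h : (j : ℕ) + 1 < n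
  · simp only [dif_pos h]
    set j' : Fin n := ⟨(j : ℕ) + 1, h⟩ with hj'
    have hvj' : ((j' : Fin n) : ℕ) = (j : ℕ) + 1 := rfl
    have hne : j' ≠ j := by simp [hj', Fin.ext_iff]
    rw [← Finset.sum_filter_add_sum_filter_not (Pset n k) (fun a => a j ≠ 0)]
    have hz : ∑ a ∈ Finset.filter (fun a => ¬ a j ≠ 0) (Pset n k),
        (∏ l ∈ Finset.univ.erase j, u ψ (a l) (l : ℕ) s) * Dval ψ (a j) (j : ℕ) s = 0 := by
      refine Finset.sum_eq_zero fun a ha => ?_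
      have ha0 : a j = 0 := by simpa using (Finset.mem_filter.1 ha).2
      rw [ha0]
      simp [Dval]
    rw [hz, add_zero]
    rw [← Finset.sum_filter_add_sum_filter_not (Pset n (k + 1)) (fun b => b j' ≠ 0)]
    have hz2 : ∑ b ∈ Finset.filter (fun b => ¬ b j' ≠ 0) (Pset n (k + 1)),
        ((((j : ℕ) + 2) * b j' : ℕ) : ℂ) * term ψ b s = 0 := by
      refine Finset.sum_eq_zero fun b hb => ?_
      have hb0 : b j' = 0 := by simpa using (Finset.mem_filter.1 hb).2
      rw [hb0]
      simp
    rw [hz2, add_zero]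
    refine Finset.sum_nbij'
      (fun a => Function.update (Function.update a j (a j - 1)) j' (a j' + 1))
      (fun b => Function.update (Function.update b j' (b j' - 1)) j (b j + 1))
      ?_ ?_ ?_ ?_ ?_
    · intro a ha
      obtain ⟨haP, ha0⟩ := Finset.mem_filter.1 ha
      rw [mem_Pset] at haP
      have ha0' : a j ≠ 0 := ha0
      obtain ⟨A, hA⟩ : ∃ A, a j = A + 1 := ⟨a j - 1, by omega⟩
      refine Finset.mem_filter.2 ⟨mem_Pset.2 ?_, ?_⟩
      · have h1 := weight_update a j (a j - 1)
        have h2 := weight_update (Function.update a j (a j - 1)) j' (a j' + 1)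
        rw [Function.update_of_ne hne] at h2
        simp only [hvj'] at h2
        rw [hA, Nat.add_sub_cancel] at h1 h2 ⊢
        rw [Nat.mul_succ] at h1
        rw [Nat.mul_succ (↑j + 1 + 1) (a j')] at h2
        omega
      · simp [Function.update_self]
    · intro b hb
      obtain ⟨hbP, hb0⟩ := Finset.mem_filter.1 hb
      rw [mem_Pset] at hbP
      have hb0' : b j' ≠ 0 := hb0
      obtain ⟨B, hB⟩ : ∃ B, b j' = B + 1 := ⟨b j' - 1, by omega⟩
      refine Finset.mem_filter.2 ⟨mem_Pset.2 ?_, ?_⟩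
      · have h1 := weight_update b j' (b j' - 1)
        have h2 := weight_update (Function.update b j' (b j' - 1)) j (b j + 1)
        rw [Function.update_of_ne hne.symm] at h2
        simp only [hvj'] at h1
        rw [hB, Nat.add_sub_cancel] at h1 h2 ⊢
        rw [Nat.mul_succ (↑j + 1 + 1) B] at h1
        rw [Nat.mul_succ (↑j + 1) (b j)] at h2
        omega
      · simp [Function.update_of_ne hne.symm, Function.update_self]
    · intro a ha
      have ha0 : a j ≠ 0 := (Finset.mem_filter.1 ha).2
      funext l
      by_cases h1 : l = j
      · subst h1
        rw [Function.update_self, Function.update_of_ne hne.symm, Function.update_self]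
        omega
      · by_cases h2 : l = j'
        · subst h2
          rw [Function.update_of_ne h1, Function.update_self, Function.update_self]
          omega
        · rw [Function.update_of_ne h1, Function.update_of_ne h2,
            Function.update_of_ne h2, Function.update_of_ne h1]
    · intro b hb
      have hb0 : b j' ≠ 0 := (Finset.mem_filter.1 hb).2
      funext l
      by_cases h1 : l = j'
      · subst h1
        rw [Function.update_self, Function.update_of_ne hne, Function.update_self]
        omega
      · by_cases h2 : l = j
        · subst h2
          rw [Function.update_of_ne h1, Function.update_self, Function.update_self]
          omega
        · rw [Function.update_of_ne h1, Function.update_of_ne h2,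
            Function.update_of_ne h2, Function.update_of_ne h1]
    · intro a ha
      have ha0 : a j ≠ 0 := (Finset.mem_filter.1 ha).2
      rw [key1 ψ j h a s ha0, ← hj', Function.update_self]
      push_cast
      ring
  · simp only [dif_neg h]
    simp only [Nat.cast_zero, zero_mul, Finset.sum_const_zero]
    refine Finset.sum_eq_zero fun a ha => ?_
    have hj1 : (j : ℕ) + 1 = n := by have := j.isLt; omega
    have haj : a j = 0 := Pset_big ha (by omega)
    rw [haj]
    simp [Dval]

lemma coeff_sum {n : ℕ} (hn : 0 < n) (b : Fin n → ℕ) :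
    ((b ⟨0, hn⟩ : ℕ) +
        ∑ j : Fin n, (if h : (j : ℕ) + 1 < n then ((j : ℕ) + 2) * b ⟨(j : ℕ) + 1, h⟩ else 0))
      = ∑ l : Fin n, ((l : ℕ) + 1) * b l := by
  set i0 : Fin n := ⟨0, hn⟩ with hi0
  rw [← Finset.add_sum_erase _ (fun l : Fin n => ((l : ℕ) + 1) * b l) (Finset.mem_univ i0)]
  have hv0 : (i0 : ℕ) = 0 := rfl
  congr 1
  · rw [hv0]; ring
  rw [← Finset.sum_filter_add_sum_filter_not Finset.univ (fun j : Fin n => (j : ℕ) + 1 < n)]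
  have h0 : ∑ j ∈ Finset.filter (fun j : Fin n => ¬ (j : ℕ) + 1 < n) Finset.univ,
      (if h : (j : ℕ) + 1 < n then ((j : ℕ) + 2) * b ⟨(j : ℕ) + 1, h⟩ else 0) = 0 :=
    Finset.sum_eq_zero fun j hj => dif_neg (Finset.mem_filter.1 hj).2
  rw [h0, add_zero]
  refine Finset.sum_bij
    (fun j hj => (⟨(j : ℕ) + 1, (Finset.mem_filter.1 hj).2⟩ : Fin n)) ?_ ?_ ?_ ?_
  · intro j hj
    refine Finset.mem_erase.2 ⟨?_, Finset.mem_univ _⟩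
    simp [hi0, Fin.ext_iff]
  · intro j1 h1 j2 h2 he
    have hv : (j1 : ℕ) + 1 = (j2 : ℕ) + 1 := by simpa [Fin.ext_iff] using he
    exact Fin.ext (by omega)
  · intro l hl
    have hl0 : (l : ℕ) ≠ 0 := by
      have := (Finset.mem_erase.1 hl).1
      simpa [hi0, Fin.ext_iff] using this
    have hlt := l.isLt
    refine ⟨⟨(l : ℕ) - 1, by omega⟩, Finset.mem_filter.2 ⟨Finset.mem_univ _, by simp; omega⟩, ?_⟩
    simp [Fin.ext_iff]
    omega
  · intro j hj
    rw [dif_pos (Finset.mem_filter.1 hj).2]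

lemma Pset_zero (n : ℕ) : Pset n 0 = {fun _ => 0} := by
  ext a
  rw [mem_Pset, Finset.mem_singleton]
  constructor
  · intro hs
    funext l
    have hz := (Finset.sum_eq_zero_iff.1 hs) l (Finset.mem_univ l)
    rcases Nat.mul_eq_zero.1 hz with h | h
    · omega
    · simpa using h
  · intro h
    subst h
    simp

lemma main (hψ : ContDiff ℂ ⊤ ψ) :
    ∀ (k n : ℕ), k ≤ n → ∀ s : ℂ,
      iterf ψ k s = (k.factorial : ℂ) * ∑ a ∈ Pset n k, term ψ a s := by
  intro k
  induction k with
  | zero =>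
    intro n _ s
    rw [Pset_zero]
    simp [iterf, term, u]
  | succ k ih =>
    intro n hkn s
    have hn : 0 < n := by omega
    have hstep : iterf ψ (k + 1) s = deriv (iterf ψ k) s - (1 / 2) * ψ s * iterf ψ k s := rfl
    have hfun : iterf ψ k = fun x => (k.factorial : ℂ) * ∑ a ∈ Pset n k, term ψ a x :=
      funext fun x => ih n (by omega) x
    have hderiv : deriv (iterf ψ k) s
        = (k.factorial : ℂ) * ∑ a ∈ Pset n k, ∑ j : Fin n,
            (∏ l ∈ Finset.univ.erase j, u ψ (a l) (l : ℕ) s) * Dval ψ (a j) (j : ℕ) s := by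
      rw [hfun]
      exact (HasDerivAt.const_mul _
        (HasDerivAt.fun_sum fun a _ => hasDerivAt_term ψ hψ a s)).deriv
    rw [hstep, hderiv, hfun]
    have hsplit : (k.factorial : ℂ) * (∑ a ∈ Pset n k, ∑ j : Fin n,
          (∏ l ∈ Finset.univ.erase j, u ψ (a l) (l : ℕ) s) * Dval ψ (a j) (j : ℕ) s)
        - 1 / 2 * ψ s * ((k.factorial : ℂ) * ∑ a ∈ Pset n k, term ψ a s)
        = (k.factorial : ℂ) * ((∑ a ∈ Pset n k, ∑ j : Fin n,
            (∏ l ∈ Finset.univ.erase j, u ψ (a l) (l : ℕ) s) * Dval ψ (a j) (j : ℕ) s)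
          + ∑ a ∈ Pset n k, (-(1 / 2) : ℂ) * ψ s * term ψ a s) := by
      have hm : ∑ a ∈ Pset n k, (-(1 / 2) : ℂ) * ψ s * term ψ a s
          = (-(1 / 2) : ℂ) * ψ s * ∑ a ∈ Pset n k, term ψ a s := by
        rw [Finset.mul_sum]
      rw [hm]
      ring
    rw [hsplit]
    have e1 : (∑ a ∈ Pset n k, ∑ j : Fin n,
          (∏ l ∈ Finset.univ.erase j, u ψ (a l) (l : ℕ) s) * Dval ψ (a j) (j : ℕ) s)
        = ∑ b ∈ Pset n (k + 1),
            ((∑ j : Fin n, (if h : (j : ℕ) + 1 < n then ((j : ℕ) + 2) * b ⟨(j : ℕ) + 1, h⟩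
              else 0) : ℕ) : ℂ) * term ψ b s := by
      rw [Finset.sum_comm]
      rw [Finset.sum_congr rfl fun j (_ : j ∈ Finset.univ) => sumM ψ hkn j s]
      rw [Finset.sum_comm]
      refine Finset.sum_congr rfl fun b _ => ?_
      rw [← Finset.sum_mul, ← Nat.cast_sum]
    have e3 : (∑ a ∈ Pset n k, (-(1 / 2) : ℂ) * ψ s * term ψ a s)
        = ∑ b ∈ Pset n (k + 1), ((b ⟨0, hn⟩ : ℕ) : ℂ) * term ψ b s := by
      rw [Finset.sum_congr rfl fun a (_ : a ∈ Pset n k) => key0 ψ hn a s]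
      exact sumA ψ hn s
    rw [e1, e3, ← Finset.sum_add_distrib]
    have e4 : ∀ b ∈ Pset n (k + 1),
        (((∑ j : Fin n, (if h : (j : ℕ) + 1 < n then ((j : ℕ) + 2) * b ⟨(j : ℕ) + 1, h⟩
            else 0) : ℕ) : ℂ) * term ψ b s + ((b ⟨0, hn⟩ : ℕ) : ℂ) * term ψ b s)
          = ((k + 1 : ℕ) : ℂ) * term ψ b s := by
      intro b hb
      have hc := coeff_sum hn b
      have hb' := mem_Pset.1 hb
      rw [← add_mul, ← Nat.cast_add, add_comm
        (∑ j : Fin n, (if h : (j : ℕ) + 1 < n then ((j : ℕ) + 2) * b ⟨(j : ℕ) + 1, h⟩ else 0))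
        (b ⟨0, hn⟩ : ℕ), hc, hb']
    rw [Finset.sum_congr rfl e4, ← Finset.mul_sum]
    rw [Nat.factorial_succ]
    push_cast
    ring

end Stmt2Aux

theorem stmt_2 (ψ : ℂ → ℂ) (hψ : ContDiff ℂ ⊤ ψ) (k : ℕ) (hk : 1 ≤ k) (s : ℂ) :
    iterf ψ k s =
      (k.factorial : ℂ) *
        ∑ a ∈ Finset.filter
            (fun a : Fin k → ℕ => ∑ l : Fin k, ((l : ℕ) + 1) * a l = k)
            (Fintype.piFinset fun _ : Fin k => Finset.range (k + 1)),
          (-(1 / 2) : ℂ) ^ (∑ l : Fin k, a l) *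
            ∏ l : Fin k,
              (1 / ((a l).factorial : ℂ)) *
                (iteratedDeriv (l : ℕ) ψ s / (((l : ℕ) + 1).factorial : ℂ)) ^ (a l) := by
  rw [Stmt2Aux.main ψ hψ k k le_rfl s]
  congr 1
  refine Finset.sum_congr rfl fun a _ => ?_
  rw [← Finset.prod_pow_eq_pow_sum, ← Finset.prod_mul_distrib]
  refine Finset.prod_congr rfl fun l _ => ?_
  unfold Stmt2Aux.u Stmt2Aux.H
  ring
end

section
/- Let φ be holomorphic on the closed disc |z − σ₀| ≤ σ₀ (with σ₀ > 1/2), with φ(σ₀) ≠ 0, and |φ(z)| ≤ M on the disc. Then the number q of zeros of φ in the smaller disc |z − σ₀| ≤ σ₀ − 1/2 satisfies q ≤ (log M − log|φ(σ₀)|) / log(σ₀/(σ₀ − 1/2)). (Jensen-type zero-counting bound.) -/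
open Complex Set

lemma analyticOnNhd_dslope {f : ℂ → ℂ} {s : Set ℂ} {a : ℂ}
    (hf : AnalyticOnNhd ℂ f s) (ha : a ∈ s) :
    AnalyticOnNhd ℂ (dslope f a) s := by
  intro z hz
  rcases eq_or_ne z a with rfl | h
  · obtain ⟨p, hp⟩ := hf z ha
    exact hp.has_fpower_series_dslope_fslope.analyticAt
  · refine AnalyticAt.congr ?_ (dslope_eventuallyEq_slope_of_ne f h).symm
    have : AnalyticAt ℂ (fun w => (w - a)⁻¹ • (f w - f a)) z := by
      exact ((analyticAt_id.sub analyticAt_const).inv (sub_ne_zero.2 h)).smul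
        ((hf z hz).sub analyticAt_const)
    refine this.congr ?_
    filter_upwards with w
    rfl

lemma factor_out {f : ℂ → ℂ} {s : Set ℂ} (t : Finset ℂ)
    (hf : AnalyticOnNhd ℂ f s) (hts : (t : Set ℂ) ⊆ s) (h0 : ∀ w ∈ t, f w = 0) :
    ∃ g : ℂ → ℂ, AnalyticOnNhd ℂ g s ∧ ∀ z, f z = (∏ w ∈ t, (z - w)) * g z := by
  classical
  induction t using Finset.induction generalizing f with
  | empty => exact ⟨f, hf, fun z => by simp⟩
  | @insert a t ha ih =>
    have haS : a ∈ s := hts (by simp)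
    have hfa : f a = 0 := h0 a (by simp)
    have hd : AnalyticOnNhd ℂ (dslope f a) s := analyticOnNhd_dslope hf haS
    have hfz : ∀ z, f z = (z - a) * dslope f a z := by
      intro z
      have := sub_smul_dslope f a z
      rw [hfa, sub_zero] at this
      simpa [smul_eq_mul] using this.symm
    have h0' : ∀ w ∈ t, dslope f a w = 0 := by
      intro w hw
      have hwa : w ≠ a := fun h => ha (h ▸ hw)
      have := hfz w
      rw [h0 w (by simp [hw])] at this
      have hsub : (w - a) ≠ 0 := sub_ne_zero.2 hwa
      field_simp at this
      exact (mul_eq_zero.mp this.symm).resolve_left hsub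
    obtain ⟨g, hg, hgf⟩ := ih hd (fun w hw => hts (by simp [hw])) h0'
    refine ⟨g, hg, fun z => ?_⟩
    rw [hfz z, hgf z, Finset.prod_insert ha]
    ring

theorem stmt_6 (φ : ℂ → ℂ) (σ₀ M : ℝ) (hσ : 1 / 2 < σ₀)
    (hφ : AnalyticOnNhd ℂ φ (Metric.closedBall (σ₀ : ℂ) σ₀))
    (hne : φ (σ₀ : ℂ) ≠ 0)
    (hM : ∀ z ∈ Metric.closedBall (σ₀ : ℂ) σ₀, ‖φ z‖ ≤ M) :
    ({z ∈ Metric.closedBall (σ₀ : ℂ) (σ₀ - 1 / 2) | φ z = 0}).Finite ∧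
      (({z ∈ Metric.closedBall (σ₀ : ℂ) (σ₀ - 1 / 2) | φ z = 0}).ncard : ℝ) ≤
        (Real.log M - Real.log (‖φ (σ₀ : ℂ)‖)) /
          Real.log (σ₀ / (σ₀ - 1 / 2)) := by
  classical
  have hσ0 : (0:ℝ) < σ₀ := by linarith
  have hσhalf : (0:ℝ) < σ₀ - 1/2 := by linarith
  have hmemσ : (σ₀:ℂ) ∈ Metric.closedBall (σ₀:ℂ) σ₀ := Metric.mem_closedBall_self hσ0.le
  have hsub : Metric.closedBall (σ₀:ℂ) (σ₀ - 1/2) ⊆ Metric.closedBall (σ₀:ℂ) σ₀ :=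
    Metric.closedBall_subset_closedBall (by linarith)
  set S := {z ∈ Metric.closedBall (σ₀:ℂ) (σ₀ - 1/2) | φ z = 0} with hS
  -- finiteness
  have hfin : S.Finite := by
    by_contra hinf
    obtain ⟨x, hxK, hacc⟩ := (Set.Infinite.exists_accPt_of_subset_isCompact hinf
      (ProperSpace.isCompact_closedBall (σ₀:ℂ) (σ₀ - 1/2)) (fun z hz => hz.1))
    have hfreq : ∃ᶠ z in nhdsWithin x {x}ᶜ, φ z = 0 := by
      rw [accPt_iff_frequently] at hacc
      rw [frequently_nhdsWithin_iff]
      exact hacc.mono (fun z hz => ⟨hz.2.2, hz.1⟩)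
    have := hφ.eqOn_zero_of_preconnected_of_frequently_eq_zero
      (convex_closedBall (σ₀:ℂ) σ₀).isPreconnected (hsub hxK) hfreq hmemσ
    exact hne this
  refine ⟨hfin, ?_⟩
  set T := hfin.toFinset with hT
  set q := T.card with hq
  have hcard : S.ncard = q := by
    rw [hq, hT, ← Set.ncard_coe_finset, hfin.coe_toFinset]
  -- factor out zeros
  have hTs : (T : Set ℂ) ⊆ Metric.closedBall (σ₀:ℂ) σ₀ := by
    intro z hz
    rw [hT] at hz; simp only [Set.Finite.coe_toFinset] at hz
    exact hsub hz.1
  have hT0 : ∀ w ∈ T, φ w = 0 := by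
    intro w hw; rw [hT, Set.Finite.mem_toFinset] at hw; exact hw.2
  obtain ⟨ψ, hψ, hfac⟩ := factor_out T hφ hTs hT0
  -- the auxiliary function
  set g : ℂ → ℂ := fun z => ψ z * ∏ w ∈ T, ((σ₀:ℂ)^2 - (starRingEnd ℂ) (w - σ₀) * (z - σ₀))
    with hg
  have hganal : AnalyticOnNhd ℂ g (Metric.closedBall (σ₀:ℂ) σ₀) := by
    intro z hz
    exact (hψ z hz).mul (Finset.analyticAt_fun_prod T (fun w _ =>
      (analyticAt_const.sub (analyticAt_const.mul (analyticAt_id.sub analyticAt_const)))))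
  have hMpos : 0 < M := lt_of_lt_of_le (norm_pos_iff.mpr hne) (hM _ hmemσ)
  -- bound on the sphere
  have hsphere : ∀ z ∈ frontier (Metric.ball (σ₀:ℂ) σ₀), ‖g z‖ ≤ σ₀^q * M := by
    rw [frontier_ball _ hσ0.ne']
    intro z hz
    rw [Metric.mem_sphere, Complex.dist_eq] at hz
    have key : ∀ w ∈ T, (σ₀:ℂ)^2 - (starRingEnd ℂ) (w - σ₀) * (z - σ₀)
        = (z - σ₀) * (starRingEnd ℂ) (z - w) := by
      intro w _
      have h1 : (z - (σ₀:ℂ)) * (starRingEnd ℂ) (z - σ₀) = ((σ₀:ℂ))^2 := by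
        rw [Complex.mul_conj', hz]
      calc (σ₀:ℂ)^2 - (starRingEnd ℂ) (w - σ₀) * (z - σ₀)
          = (z - σ₀) * (starRingEnd ℂ) (z - σ₀) - (starRingEnd ℂ) (w - σ₀) * (z - σ₀) := by
            rw [h1]
        _ = (z - σ₀) * ((starRingEnd ℂ) (z - σ₀) - (starRingEnd ℂ) (w - σ₀)) := by ring
        _ = (z - σ₀) * (starRingEnd ℂ) ((z - σ₀) - (w - σ₀)) := by
            congr 1; exact (map_sub (starRingEnd ℂ) _ _).symm
        _ = (z - σ₀) * (starRingEnd ℂ) (z - w) := by congr 2; ring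
    have habs : ‖g z‖ = σ₀^q * ‖φ z‖ := by
      have e1 : ‖g z‖ = ‖ψ z‖ * ∏ w ∈ T,
          (σ₀ * ‖z - w‖) := by
        rw [hg]
        simp only
        rw [norm_mul, norm_prod]
        congr 1
        refine Finset.prod_congr rfl fun w hw => ?_
        rw [key w hw, norm_mul, Complex.norm_conj, hz]
      rw [e1, Finset.prod_mul_distrib, Finset.prod_const, hfac z, norm_mul, norm_prod, ← hq]
      ring
    rw [habs]
    have hφb := hM z (by rw [Metric.mem_closedBall, Complex.dist_eq, hz])
    have hσq : (0:ℝ) ≤ σ₀^q := pow_nonneg hσ0.le q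
    nlinarith [norm_nonneg (φ z)]
  -- maximum modulus
  have hgbound : ‖g (σ₀:ℂ)‖ ≤ σ₀^q * M := by
    refine Complex.norm_le_of_forall_mem_frontier_norm_le Metric.isBounded_ball ?_ hsphere ?_
    · apply DifferentiableOn.diffContOnCl
      rw [closure_ball _ hσ0.ne']
      exact hganal.differentiableOn
    · rw [closure_ball _ hσ0.ne']
      exact hmemσ
  -- compute g σ₀
  have hgσ : ‖g (σ₀:ℂ)‖ = ‖ψ (σ₀:ℂ)‖ * (σ₀^2)^q := by
    rw [hg]
    simp only [sub_self, mul_zero, sub_zero, Finset.prod_const, norm_mul, norm_pow,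
      Complex.norm_real, Real.norm_eq_abs, _root_.abs_of_pos hσ0, ← hq]
  -- |ψ σ₀| σ₀^q ≤ M
  have hσqpos : (0:ℝ) < σ₀^q := pow_pos hσ0 q
  have hψσ : ‖ψ (σ₀:ℂ)‖ * σ₀^q ≤ M := by
    rw [hgσ] at hgbound
    have h2 : (σ₀^2)^q = σ₀^q * σ₀^q := by rw [← pow_mul, two_mul, pow_add]
    have h3 : (‖ψ (σ₀:ℂ)‖ * σ₀^q) * σ₀^q ≤ M * σ₀^q := by
      calc (‖ψ (σ₀:ℂ)‖ * σ₀^q) * σ₀^q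
          = ‖ψ (σ₀:ℂ)‖ * (σ₀^2)^q := by rw [h2]; ring
        _ ≤ σ₀^q * M := hgbound
        _ = M * σ₀^q := by ring
    exact le_of_mul_le_mul_right h3 hσqpos
  -- |φ σ₀| ≤ M ((σ₀-1/2)/σ₀)^q
  have hφσ : ‖φ (σ₀:ℂ)‖ ≤ M * ((σ₀ - 1/2)/σ₀)^q := by
    have hP : ‖φ (σ₀:ℂ)‖
        = (∏ w ∈ T, ‖(σ₀:ℂ) - w‖) * ‖ψ (σ₀:ℂ)‖ := by
      rw [hfac, norm_mul, norm_prod]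
    have hle : ∏ w ∈ T, ‖(σ₀:ℂ) - w‖ ≤ (σ₀ - 1/2)^q := by
      have : (σ₀ - 1/2)^q = ∏ _w ∈ T, (σ₀ - 1/2) := by rw [Finset.prod_const, ← hq]
      rw [this]
      refine Finset.prod_le_prod (fun w _ => norm_nonneg _) ?_
      intro w hw
      have hwS : w ∈ S := by rwa [hT, Set.Finite.mem_toFinset] at hw
      have hwd := hwS.1
      rw [Metric.mem_closedBall, Complex.dist_eq] at hwd
      calc ‖(σ₀:ℂ) - w‖ = ‖-(w - σ₀)‖ := by congr 1; ring
        _ = ‖w - σ₀‖ := by rw [norm_neg]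
        _ ≤ σ₀ - 1/2 := hwd
    have hψnn : 0 ≤ ‖ψ (σ₀:ℂ)‖ := norm_nonneg _
    have h4 : ‖φ (σ₀:ℂ)‖ ≤ (σ₀ - 1/2)^q * ‖ψ (σ₀:ℂ)‖ := by
      rw [hP]
      exact mul_le_mul_of_nonneg_right hle hψnn
    have h5 : ‖ψ (σ₀:ℂ)‖ ≤ M / σ₀^q := by
      rw [le_div_iff₀ hσqpos]; exact hψσ
    calc ‖φ (σ₀:ℂ)‖ ≤ (σ₀ - 1/2)^q * ‖ψ (σ₀:ℂ)‖ := h4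
      _ ≤ (σ₀ - 1/2)^q * (M / σ₀^q) := by
          exact mul_le_mul_of_nonneg_left h5 (pow_nonneg hσhalf.le q)
      _ = M * ((σ₀ - 1/2)/σ₀)^q := by rw [div_pow]; field_simp
  -- take logarithms
  have hrpos : (0:ℝ) < (σ₀ - 1/2)/σ₀ := div_pos hσhalf hσ0
  have hlogpos : 0 < Real.log (σ₀ / (σ₀ - 1/2)) :=
    Real.log_pos ((one_lt_div hσhalf).mpr (by linarith))
  have habsφpos : 0 < ‖φ (σ₀:ℂ)‖ := norm_pos_iff.mpr hne
  have hlog : Real.log (‖φ (σ₀:ℂ)‖)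
      ≤ Real.log M + q * Real.log ((σ₀ - 1/2)/σ₀) := by
    have := Real.log_le_log habsφpos hφσ
    rwa [Real.log_mul hMpos.ne' (pow_pos hrpos q).ne', Real.log_pow] at this
  have hloginv : Real.log (σ₀ / (σ₀ - 1/2)) = - Real.log ((σ₀ - 1/2)/σ₀) := by
    rw [← Real.log_inv]
    congr 1
    rw [inv_div]
  rw [hcard, le_div_iff₀ hlogpos]
  rw [hloginv]
  linarith
end
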